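/- Let (X, 𝒜, μ) be a q-measure space and let f = Σ_{i=1}^{n} αᵢ χ_{Aᵢ} be a simple measurable function with A₁, …, Aₙ ∈ 𝒜 mutually disjoint and 0 < α₁ < α₂ < ⋯ < αₙ. Then ∫ f dμ = Σ_{k=1}^{n} α_k [ Σ_{j=k+1}^{n} μ(A_k ∪ A_j) − (n − k − 1) μ(A_k) − Σ_{j=k+1}^{n} μ(A_j) ] (for k = n the bracket equals μ(Aₙ)); equivalently, setting α₀ = 0, ∫ f dμ = Σ_{i=0}^{n−1} (α_{i+1} − α_i) μ(A_{i+1} ∪ ⋯ ∪ Aₙ). -/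

import Mathlib

/-! Since `f ≥ 0` the negative part of the `q`-integral vanishes, and for `λ ∈ [αᵢ, αᵢ₊₁)` the
superlevel set `{f > λ}` is the tail union `Aᵢ₊₁ ∪ ⋯ ∪ Aₙ`, while it is empty for `λ ≥ αₙ`. So
`λ ↦ μ{f > λ}` is a step function, and integrating it gives the second formula. Abel summation
rewrites that as `Σₖ αₖ (μ(Aₖ ∪ ⋯ ∪ Aₙ) − μ(Aₖ₊₁ ∪ ⋯ ∪ Aₙ))`, and grade-2 additivity, applied
to `Aₖ`, `Aⱼ` and the remaining union and iterated over `j`, expands each difference into the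
bracket of the first formula. -/

open MeasureTheory Set Filter Topology

/-- Grade-2 additivity for a set function on the measurable sets of `X`. -/
def Grade2Additive {X : Type*} [MeasurableSpace X] (μ : Set X → ℝ) : Prop :=
  ∀ A B C : Set X, MeasurableSet A → MeasurableSet B → MeasurableSet C →
    Disjoint A B → Disjoint A C → Disjoint B C →
    μ (A ∪ B ∪ C) = μ (A ∪ B) + μ (A ∪ C) + μ (B ∪ C) - μ A - μ B - μ C

/-- Continuity of a set function along increasing and decreasing sequences. -/
def QContinuous {X : Type*} [MeasurableSpace X] (μ : Set X → ℝ) : Prop :=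
  (∀ A : ℕ → Set X, (∀ i, MeasurableSet (A i)) → Monotone A →
    Tendsto (fun i => μ (A i)) atTop (𝓝 (μ (⋃ i, A i)))) ∧
  (∀ A : ℕ → Set X, (∀ i, MeasurableSet (A i)) → Antitone A →
    Tendsto (fun i => μ (A i)) atTop (𝓝 (μ (⋂ i, A i))))

/-- A `q`-measure: a nonnegative, grade-2 additive, continuous set function. -/
structure IsQMeasure {X : Type*} [MeasurableSpace X] (μ : Set X → ℝ) : Prop where
  nonneg : ∀ A : Set X, MeasurableSet A → 0 ≤ μ A
  grade2 : Grade2Additive μ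
  cont : QContinuous μ

/-- The `q`-integral:
`∫ f dμ = ∫₀^∞ μ(f⁻¹(λ,∞)) dλ − ∫₀^∞ μ(f⁻¹(−∞,−λ)) dλ`,
the integrals on the right being Lebesgue integrals in `λ`. -/
noncomputable def qIntegral {X : Type*} [MeasurableSpace X]
    (μ : Set X → ℝ) (f : X → ℝ) : ℝ :=
  (∫ l in Set.Ioi (0 : ℝ), μ (f ⁻¹' Set.Ioi l))
    - ∫ l in Set.Ioi (0 : ℝ), μ (f ⁻¹' Set.Iio (-l))

/-- `f` is `μ`-integrable: `f` is measurable and both Lebesgue integrals defining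
the `q`-integral are finite. -/
def QIntegrable {X : Type*} [MeasurableSpace X] (μ : Set X → ℝ) (f : X → ℝ) : Prop :=
  Measurable f ∧
  IntegrableOn (fun l => μ (f ⁻¹' Set.Ioi l)) (Set.Ioi (0 : ℝ)) ∧
  IntegrableOn (fun l => μ (f ⁻¹' Set.Iio (-l))) (Set.Ioi (0 : ℝ))

namespace Grade2Additive

variable {X : Type*} [MeasurableSpace X] {μ : Set X → ℝ}

theorem apply_empty (h : Grade2Additive μ) : μ ∅ = 0 := by
  have := h univ ∅ ∅ .univ .empty .empty (disjoint_empty _) (disjoint_empty _) (disjoint_empty _)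
  simp only [union_empty] at this
  linarith

theorem union_biUnion {ι : Type*} (h : Grade2Additive μ) {E : Set X} (hE : MeasurableSet E)
    {A : ι → Set X} {s : Finset ι} (hA : ∀ j ∈ s, MeasurableSet (A j))
    (hEA : ∀ j ∈ s, Disjoint E (A j)) (hdisj : (s : Set ι).PairwiseDisjoint A) :
    μ (E ∪ ⋃ j ∈ s, A j) = μ (⋃ j ∈ s, A j) + ∑ j ∈ s, μ (E ∪ A j)
      - ((s.card : ℝ) - 1) * μ E - ∑ j ∈ s, μ (A j) := by
  classical
  induction s using Finset.induction_on with
  | empty => simp [h.apply_empty]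
  | @insert a t ha ih =>
    simp only [Finset.mem_insert, forall_eq_or_imp] at hA hEA
    rw [Finset.coe_insert, pairwiseDisjoint_insert_of_notMem (by simpa using ha)] at hdisj
    have haU : Disjoint (A a) (⋃ j ∈ t, A j) := disjoint_iUnion₂_right.2 hdisj.2
    have hEU : Disjoint E (⋃ j ∈ t, A j) := disjoint_iUnion₂_right.2 hEA.2
    rw [Finset.set_biUnion_insert, ← union_assoc,
      h E (A a) _ hE hA.1 (t.measurableSet_biUnion hA.2) hEA.1 hEU haU,
      ih hA.2 hEA.2 hdisj.1, Finset.sum_insert ha, Finset.sum_insert ha,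
      Finset.card_insert_of_notMem ha]
    push_cast
    ring

theorem biUnion_Icc_sub_biUnion_Icc_succ (h : Grade2Additive μ) {A : ℕ → Set X} {k n : ℕ}
    (hkn : k ≤ n)
    (hA : ∀ j ∈ Finset.Icc k n, MeasurableSet (A j))
    (hdisj : (Finset.Icc k n : Set ℕ).PairwiseDisjoint A) :
    μ (⋃ j ∈ Finset.Icc k n, A j) - μ (⋃ j ∈ Finset.Icc (k + 1) n, A j)
      = ∑ j ∈ Finset.Icc (k + 1) n, μ (A k ∪ A j) - ((n : ℝ) - k - 1) * μ (A k)
        - ∑ j ∈ Finset.Icc (k + 1) n, μ (A j) := by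
  have hsub : Finset.Icc (k + 1) n ⊆ Finset.Icc k n := Finset.Icc_subset_Icc_left k.le_succ
  have hk : k ∈ Finset.Icc k n := Finset.left_mem_Icc.2 hkn
  have hcard : ((Finset.Icc (k + 1) n).card : ℝ) = n - k := by
    rw [Nat.card_Icc, Nat.add_sub_add_right, Nat.cast_sub hkn]
  rw [← Finset.insert_Icc_add_one_left_eq_Icc hkn, Finset.set_biUnion_insert,
    h.union_biUnion (hA k hk) (fun j hj => hA j (hsub hj))
      (fun j hj => hdisj hk (hsub hj) (Nat.ne_of_lt (Finset.mem_Icc.1 hj).1))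
      (hdisj.subset (Finset.coe_subset.2 hsub)), hcard]
  ring

end Grade2Additive

theorem qIntegral_of_nonneg {X : Type*} [MeasurableSpace X] {μ : Set X → ℝ} (hμ : μ ∅ = 0)
    {f : X → ℝ} (hf : 0 ≤ f) : qIntegral μ f = ∫ l in Ioi 0, μ (f ⁻¹' Ioi l) := by
  have hneg : EqOn (fun l => μ (f ⁻¹' Iio (-l))) (fun _ => 0) (Ioi 0) := fun l hl => by
    have : f ⁻¹' Iio (-l) = ∅ := eq_empty_of_forall_notMem fun x hx =>
      (hf x).not_gt ((mem_Iio.1 hx).trans (neg_neg_of_pos hl))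
    simp only [this, hμ]
  rw [qIntegral, setIntegral_congr_fun measurableSet_Ioi hneg, integral_zero, sub_zero]

theorem sum_range_sub_mul_eq_sum_Icc_mul_sub {R : Type*} [CommRing R] (a c : ℕ → R) (n : ℕ) :
    ∑ i ∈ Finset.range n, (a (i + 1) - a i) * c (i + 1)
      = ∑ k ∈ Finset.Icc 1 n, a k * (c k - c (k + 1)) + a n * c (n + 1) - a 0 * c 1 := by
  induction n with
  | zero => simp
  | succ m ih =>
    rw [Finset.sum_range_succ, ih, Finset.sum_Icc_succ_top (by omega)]
    ring

theorem exists_mem_Ico_of_le_of_lt {α : ℕ → ℝ} {l : ℝ} (h0 : α 0 ≤ l) :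
    ∀ {n : ℕ}, l < α n → ∃ i < n, l ∈ Ico (α i) (α (i + 1))
  | 0, hn => absurd h0 hn.not_ge
  | n + 1, hn => by
    by_cases h : α n ≤ l
    · exact ⟨n, n.lt_succ_self, h, hn⟩
    · obtain ⟨i, hi, hl⟩ := exists_mem_Ico_of_le_of_lt h0 (not_le.1 h)
      exact ⟨i, hi.trans n.lt_succ_self, hl⟩

theorem setIntegral_Ioi_zero_indicator_Ico {a b : ℝ} (ha : 0 ≤ a) (hab : a ≤ b) (c : ℝ) :
    ∫ l in Ioi 0, (Ico a b).indicator (fun _ => c) l = (b - a) * c := by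
  have hIco : Ici 0 ∩ Ico a b = Ico a b := inter_eq_right.2 fun x hx => ha.trans hx.1
  rw [← integral_Ici_eq_integral_Ioi, setIntegral_indicator measurableSet_Ico, hIco,
    setIntegral_const, Real.volume_real_Ico_of_le hab, smul_eq_mul]

theorem setIntegral_Ioi_zero_sum_indicator_Ico {α c : ℕ → ℝ} {n : ℕ}
    (hα : MonotoneOn α (Iic n)) (hα0 : 0 ≤ α 0) :
    ∫ l in Ioi 0, ∑ i ∈ Finset.range n, (Ico (α i) (α (i + 1))).indicator (fun _ => c i) l
      = ∑ i ∈ Finset.range n, (α (i + 1) - α i) * c i := by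
  rw [integral_finsetSum]
  · refine Finset.sum_congr rfl fun i hi => ?_
    have hi : i + 1 ≤ n := Finset.mem_range.1 hi
    exact setIntegral_Ioi_zero_indicator_Ico
      (hα0.trans (hα (mem_Iic.2 n.zero_le) (mem_Iic.2 (by omega)) i.zero_le))
      (hα (mem_Iic.2 (by omega)) (mem_Iic.2 hi) i.le_succ) _
  · intro i _
    exact (integrableOn_const measure_Ico_lt_top.ne).integrable_indicator measurableSet_Ico
      |>.integrableOn

section Monotone

variable {α : ℕ → ℝ} {n i : ℕ} {l : ℝ}

theorem filter_Icc_lt_eq_Icc (hα : MonotoneOn α (Iic n)) (hi : i < n)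
    (hl : l ∈ Ico (α i) (α (i + 1))) :
    (Finset.Icc 1 n).filter (fun j => l < α j) = Finset.Icc (i + 1) n := by
  ext j
  simp only [Finset.mem_filter, Finset.mem_Icc]
  constructor
  · rintro ⟨⟨-, hjn⟩, hlj⟩
    refine ⟨not_lt.1 fun hji => ?_, hjn⟩
    exact (hα (mem_Iic.2 (by omega)) (mem_Iic.2 hi.le) (Nat.lt_succ_iff.1 hji)).not_gt
      (hl.1.trans_lt hlj)
  · rintro ⟨hij, hjn⟩
    exact ⟨⟨by omega, hjn⟩, hl.2.trans_le (hα (mem_Iic.2 (by omega)) (mem_Iic.2 hjn) hij)⟩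

theorem filter_Icc_lt_eq_empty (hα : MonotoneOn α (Iic n)) (hl : α n ≤ l) :
    (Finset.Icc 1 n).filter (fun j => l < α j) = ∅ :=
  Finset.filter_false_of_mem fun _ hj => have hjn := (Finset.mem_Icc.1 hj).2
    not_lt.2 ((hα (mem_Iic.2 hjn) self_mem_Iic hjn).trans hl)

theorem sum_indicator_Ico_eq (hα : MonotoneOn α (Iic n)) (hi : i < n)
    (hl : l ∈ Ico (α i) (α (i + 1))) (c : ℕ → ℝ) :
    ∑ j ∈ Finset.range n, (Ico (α j) (α (j + 1))).indicator (fun _ => c j) l = c i := by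
  rw [Finset.sum_eq_single_of_mem i (Finset.mem_range.2 hi), indicator_of_mem hl]
  intro j hj hji
  have hj : j < n := Finset.mem_range.1 hj
  refine indicator_of_notMem (fun hlj => ?_) _
  rcases lt_or_gt_of_ne hji with hji | hij
  · exact (hα (mem_Iic.2 hj) (mem_Iic.2 hi.le) hji).not_gt (hl.1.trans_lt hlj.2)
  · exact (hα (mem_Iic.2 (by omega)) (mem_Iic.2 hj.le) hij).not_gt (hlj.1.trans_lt hl.2)

theorem sum_indicator_Ico_eq_zero (hα : MonotoneOn α (Iic n)) (hl : α n ≤ l) (c : ℕ → ℝ) :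
    ∑ j ∈ Finset.range n, (Ico (α j) (α (j + 1))).indicator (fun _ => c j) l = 0 :=
  Finset.sum_eq_zero fun _ hj => have hjn := Finset.mem_range.1 hj
    indicator_of_notMem (fun hlj =>
      (hlj.2.trans_le ((hα (mem_Iic.2 hjn) self_mem_Iic hjn).trans hl)).false) _

end Monotone

section SimpleFunction

variable {X : Type*} {A : ℕ → Set X} {α : ℕ → ℝ} {n : ℕ}

noncomputable def simpleFunction (A : ℕ → Set X) (α : ℕ → ℝ) (n : ℕ) : X → ℝ :=
  fun x => ∑ i ∈ Finset.Icc 1 n, Set.indicator (A i) (fun _ => α i) x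

theorem simpleFunction_nonneg (hα : ∀ i ∈ Finset.Icc 1 n, 0 ≤ α i) :
    0 ≤ simpleFunction A α n :=
  fun _ => Finset.sum_nonneg fun i hi => indicator_nonneg (fun _ _ => hα i hi) _

theorem simpleFunction_of_mem (hdisj : (Finset.Icc 1 n : Set ℕ).PairwiseDisjoint A) {j : ℕ}
    (hj : j ∈ Finset.Icc 1 n) {x : X} (hx : x ∈ A j) : simpleFunction A α n x = α j := by
  rw [simpleFunction, Finset.sum_eq_single_of_mem j hj, indicator_of_mem hx]
  exact fun i hi hij => indicator_of_notMem (fun hxi => (hdisj hi hj hij).ne_of_mem hxi hx rfl) _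

theorem simpleFunction_of_notMem {x : X} (hx : ∀ j ∈ Finset.Icc 1 n, x ∉ A j) :
    simpleFunction A α n x = 0 :=
  Finset.sum_eq_zero fun j hj => indicator_of_notMem (hx j hj) _

theorem preimage_simpleFunction_Ioi (hdisj : (Finset.Icc 1 n : Set ℕ).PairwiseDisjoint A)
    {l : ℝ} (hl : 0 ≤ l) :
    simpleFunction A α n ⁻¹' Ioi l = ⋃ j ∈ (Finset.Icc 1 n).filter (fun j => l < α j), A j := by
  ext x
  simp only [mem_preimage, mem_Ioi, mem_iUnion, Finset.mem_filter, exists_prop]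
  by_cases hx : ∃ j ∈ Finset.Icc 1 n, x ∈ A j
  · obtain ⟨j, hj, hxj⟩ := hx
    rw [simpleFunction_of_mem hdisj hj hxj]
    refine ⟨fun hlj => ⟨j, ⟨hj, hlj⟩, hxj⟩, fun ⟨i, ⟨hi, hli⟩, hxi⟩ => ?_⟩
    rwa [← simpleFunction_of_mem (α := α) hdisj hj hxj, simpleFunction_of_mem hdisj hi hxi]
  · push Not at hx
    rw [simpleFunction_of_notMem hx]
    exact ⟨fun h => absurd hl h.not_ge, fun ⟨j, ⟨hj, _⟩, hxj⟩ => absurd hxj (hx j hj)⟩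

theorem apply_preimage_simpleFunction_Ioi {μ : Set X → ℝ} (hμ : μ ∅ = 0)
    (hdisj : (Finset.Icc 1 n : Set ℕ).PairwiseDisjoint A) (hα : MonotoneOn α (Iic n))
    {l : ℝ} (hl : 0 ≤ l) (hαl : α 0 ≤ l) :
    μ (simpleFunction A α n ⁻¹' Ioi l)
      = ∑ i ∈ Finset.range n,
          (Ico (α i) (α (i + 1))).indicator (fun _ => μ (⋃ j ∈ Finset.Icc (i + 1) n, A j)) l := by
  rw [preimage_simpleFunction_Ioi hdisj hl]
  by_cases hln : l < α n
  · obtain ⟨i, hi, hli⟩ := exists_mem_Ico_of_le_of_lt hαl hln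
    rw [filter_Icc_lt_eq_Icc hα hi hli, sum_indicator_Ico_eq hα hi hli]
  · rw [filter_Icc_lt_eq_empty hα (not_lt.1 hln), sum_indicator_Ico_eq_zero hα (not_lt.1 hln)]
    simpa using hμ

end SimpleFunction

theorem qIntegral_simpleFunc_general {X : Type*} [MeasurableSpace X] (μ : Set X → ℝ)
    (hμ : IsQMeasure μ) (n : ℕ)
    (A : ℕ → Set X) (hA : ∀ i ∈ Finset.Icc 1 n, MeasurableSet (A i))
    (hdisj : ∀ i ∈ Finset.Icc 1 n, ∀ j ∈ Finset.Icc 1 n, i ≠ j →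
      Disjoint (A i) (A j))
    (α : ℕ → ℝ) (hα0 : α 0 = 0)
    (hα : ∀ i j : ℕ, i < j → j ≤ n → α i < α j)
    (f : X → ℝ)
    (hf : f = fun x => ∑ i ∈ Finset.Icc 1 n, Set.indicator (A i) (fun _ => α i) x) :
    qIntegral μ f =
      ∑ k ∈ Finset.Icc 1 n, α k *
        ((∑ j ∈ Finset.Icc (k + 1) n, μ (A k ∪ A j))
          - ((n : ℝ) - k - 1) * μ (A k)
          - ∑ j ∈ Finset.Icc (k + 1) n, μ (A j)) ∧
    qIntegral μ f =
      ∑ i ∈ Finset.range n, (α (i + 1) - α i) * μ (⋃ j ∈ Finset.Icc (i + 1) n, A j) := by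
  replace hf : f = simpleFunction A α n := hf
  subst hf
  have hμ0 : μ ∅ = 0 := hμ.grade2.apply_empty
  replace hdisj : (Finset.Icc 1 n : Set ℕ).PairwiseDisjoint A := fun i hi j hj => hdisj i hi j hj
  have hmono : MonotoneOn α (Iic n) :=
    StrictMonoOn.monotoneOn fun i _ j hj hij => hα i j hij hj
  have hlayer : qIntegral μ (simpleFunction A α n)
      = ∑ i ∈ Finset.range n, (α (i + 1) - α i) * μ (⋃ j ∈ Finset.Icc (i + 1) n, A j) := by
    rw [qIntegral_of_nonneg hμ0 (simpleFunction_nonneg fun i hi =>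
        hα0.ge.trans (hmono (mem_Iic.2 n.zero_le) (mem_Iic.2 (Finset.mem_Icc.1 hi).2) i.zero_le)),
      setIntegral_congr_fun measurableSet_Ioi fun l hl =>
        apply_preimage_simpleFunction_Ioi hμ0 hdisj hmono hl.le (hα0.le.trans hl.le),
      setIntegral_Ioi_zero_sum_indicator_Ico hmono hα0.ge]
  have htop : μ (⋃ j ∈ Finset.Icc (n + 1) n, A j) = 0 := by simpa using hμ0
  refine ⟨?_, hlayer⟩
  rw [hlayer, sum_range_sub_mul_eq_sum_Icc_mul_sub α (fun k => μ (⋃ j ∈ Finset.Icc k n, A j)),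
    htop, hα0, mul_zero, zero_mul, add_zero, sub_zero]
  refine Finset.sum_congr rfl fun k hk => ?_
  obtain ⟨h1k, hkn⟩ := Finset.mem_Icc.1 hk
  have hsub : Finset.Icc k n ⊆ Finset.Icc 1 n := Finset.Icc_subset_Icc_left h1k
  rw [hμ.grade2.biUnion_Icc_sub_biUnion_Icc_succ hkn
    (fun j hj => hA j (hsub hj)) (hdisj.subset (Finset.coe_subset.2 hsub))]

/-- Lemma 4.2: the `q`-integral of a simple function `f = Σᵢ αᵢ χ_{Aᵢ}` with
`A₁, …, Aₙ` mutually disjoint measurable sets and `0 = α₀ < α₁ < ⋯ < αₙ`: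
`∫ f dμ = Σ_k α_k [Σ_{j>k} μ(A_k ∪ A_j) − (n−k−1) μ(A_k) − Σ_{j>k} μ(A_j)]`;
equivalently `∫ f dμ = Σ_{i=0}^{n−1} (α_{i+1} − α_i) μ(A_{i+1} ∪ ⋯ ∪ Aₙ)`. -/
theorem qIntegral_simpleFunc {X : Type*} [MeasurableSpace X] (μ : Set X → ℝ)
    (hμ : IsQMeasure μ) (n : ℕ) (hn : 1 ≤ n)
    (A : ℕ → Set X) (hA : ∀ i ∈ Finset.Icc 1 n, MeasurableSet (A i))
    (hdisj : ∀ i ∈ Finset.Icc 1 n, ∀ j ∈ Finset.Icc 1 n, i ≠ j →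
      Disjoint (A i) (A j))
    (α : ℕ → ℝ) (hα0 : α 0 = 0)
    (hα : ∀ i j : ℕ, i < j → j ≤ n → α i < α j)
    (f : X → ℝ)
    (hf : f = fun x => ∑ i ∈ Finset.Icc 1 n, Set.indicator (A i) (fun _ => α i) x) :
    qIntegral μ f =
      ∑ k ∈ Finset.Icc 1 n, α k *
        ((∑ j ∈ Finset.Icc (k + 1) n, μ (A k ∪ A j))
          - ((n : ℝ) - k - 1) * μ (A k)
          - ∑ j ∈ Finset.Icc (k + 1) n, μ (A j)) ∧
    qIntegral μ f =
      ∑ i ∈ Finset.range n, (α (i + 1) - α i) * μ (⋃ j ∈ Finset.Icc (i + 1) n, A j) :=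
  qIntegral_simpleFunc_general μ hμ n A hA hdisj α hα0 hα f hf
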